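/- arXiv:2510.22393 — 3 statements merged into one kernel-verified Lean document; each statement's English description precedes it below -/
import Mathlib

section
/- Let 1 ≤ p < n and suppose δ_p := λ_p − λ_{p+1} > 0. Then ‖Π̃_p − Π_p‖ ≤ π‖E‖/δ_p. -/
/-!
Weyl's inequality, proved by the Courant–Fischer dimension count, moves each eigenvalue by at most
`‖E‖`. So if `π‖E‖ < δ_p`, the top `p` eigenvalues of `Ã` stay at least `δ_p - ‖E‖` above the
bottom `n - p` eigenvalues of `A`, and the same holds with `A` and `Ã` swapped. In eigenbases,
`X = (1 - Π_p) Π̃_p` satisfies a Sylvester equation `X B - C X = G` with `B`, `C` diagonal,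
their spectra separated by that gap, and `‖G‖ ≤ ‖E‖`. Shifting `B` and `C` by the midpoints of
their spectra gives `gap * ‖X‖ ≤ ‖G‖` (the `sin Θ` theorem). Since
`Π̃_p - Π_p = (1 - Π_p) Π̃_p - Π_p (1 - Π̃_p)`, this gives `‖Π̃_p - Π_p‖ ≤ 2‖E‖ / (δ_p - ‖E‖)`,
which is at most `π‖E‖ / δ_p`. If `π‖E‖ ≥ δ_p` it is enough that any two orthogonal projections
are at distance at most `1`, because `(Q - P)² + (1 - P - Q)² = 1`.
-/

open Matrix

/-- The spectral norm (ℓ²→ℓ² operator norm) of a matrix. -/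
noncomputable def specNorm {𝕜 : Type*} [RCLike 𝕜] {m n : ℕ}
    (M : Matrix (Fin m) (Fin n) 𝕜) : ℝ :=
  ‖LinearMap.toContinuousLinearMap (Matrix.toEuclideanLin M)‖

open scoped Matrix.Norms.L2Operator

theorem norm_mul_le_norm_mul_sub_mul {R : Type*} [NormedRing R] [NormedAlgebra ℝ R]
    (X B C : R) {b c r s : ℝ} (hB : ‖B - algebraMap ℝ R b‖ ≤ r)
    (hC : ‖C - algebraMap ℝ R c‖ ≤ s) :
    (b - c - r - s) * ‖X‖ ≤ ‖X * B - C * X‖ := by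
  have hsplit : (b - c) • X =
      (X * B - C * X) - X * (B - algebraMap ℝ R b) + (C - algebraMap ℝ R c) * X := by
    simp only [mul_sub, sub_mul, ← Algebra.commutes, ← Algebra.smul_def, sub_smul]
    abel
  have hX := norm_nonneg X
  have : (b - c) * ‖X‖ ≤ ‖X * B - C * X‖ + ‖X‖ * r + s * ‖X‖ :=
    calc (b - c) * ‖X‖ ≤ ‖(b - c) • X‖ := by
          rw [norm_smul, Real.norm_eq_abs]; gcongr; exact le_abs_self _
      _ ≤ ‖X * B - C * X‖ + ‖X * (B - algebraMap ℝ R b)‖ + ‖(C - algebraMap ℝ R c) * X‖ := by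
          rw [hsplit]; exact (norm_add_le _ _).trans (add_le_add_left (norm_sub_le _ _) _)
      _ ≤ ‖X * B - C * X‖ + ‖X‖ * r + s * ‖X‖ := by
          gcongr
          · exact (norm_mul_le _ _).trans (by gcongr)
          · exact (norm_mul_le _ _).trans (by gcongr)
  linarith

theorem norm_sub_le_norm_one_sub_mul_add {R : Type*} [NormedRing R] [StarRing R]
    [NormedStarGroup R] {p q : R} (hp : IsSelfAdjoint p) (hq : IsSelfAdjoint q) :
    ‖q - p‖ ≤ ‖(1 - p) * q‖ + ‖(1 - q) * p‖ := by
  have h : q - p = (1 - p) * q - star ((1 - q) * p) := by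
    rw [star_mul, star_sub, star_one, hp.star_eq, hq.star_eq]
    noncomm_ring
  rw [h, ← norm_star ((1 - q) * p)]
  exact norm_sub_le _ _

theorem ContinuousLinearMap.norm_sub_le_one_of_isStarProjection {𝕜 E : Type*} [RCLike 𝕜]
    [NormedAddCommGroup E] [InnerProductSpace 𝕜 E] [CompleteSpace E] {p q : E →L[𝕜] E}
    (hp : IsStarProjection p) (hq : IsStarProjection q) : ‖q - p‖ ≤ 1 := by
  have hsq : (q - p) * (q - p) + (1 - p - q) * (1 - p - q) = 1 := by
    calc _ = q * q - q * p - p * q + p * p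
          + (1 - p - q - p + p * p + p * q - q + q * p + q * q) := by noncomm_ring
      _ = 1 := by rw [hp.isIdempotentElem.eq, hq.isIdempotentElem.eq]; noncomm_ring
  have hnorm_sq : ∀ T : E →L[𝕜] E, IsSelfAdjoint T →
      ∀ x, ‖T x‖ ^ 2 = RCLike.re (inner 𝕜 x ((T * T) x)) := by
    intro T hT x
    have h := hT.isSymmetric x (T x)
    rw [ContinuousLinearMap.coe_coe] at h
    rw [← inner_self_eq_norm_sq (𝕜 := 𝕜), mul_apply_eq_comp, ← h]
  refine opNorm_le_bound _ zero_le_one fun x => ?_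
  have hsum : ‖(q - p) x‖ ^ 2 + ‖(1 - p - q) x‖ ^ 2 = ‖x‖ ^ 2 := by
    rw [hnorm_sq _ (hq.isSelfAdjoint.sub hp.isSelfAdjoint),
      hnorm_sq _ (((IsSelfAdjoint.one _).sub hp.isSelfAdjoint).sub hq.isSelfAdjoint), ← map_add,
      ← inner_add_right, ← _root_.add_apply, hsq, one_apply_eq_self, inner_self_eq_norm_sq]
  rw [one_mul, ← sq_le_sq₀ (norm_nonneg _) (norm_nonneg _)]
  nlinarith [sq_nonneg ‖(1 - p - q) x‖]

namespace Matrix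

section Diagonalization

variable {ι : Type*} [Fintype ι] [DecidableEq ι]

theorem norm_diagonal_sub_algebraMap_le {β : ι → ℝ} {c r : ℝ} (hr : 0 ≤ r)
    (h : ∀ k, |β k - c| ≤ r) : ‖diagonal β - algebraMap ℝ (Matrix ι ι ℝ) c‖ ≤ r := by
  rw [algebraMap_eq_diagonal, diagonal_sub, l2_opNorm_diagonal, pi_norm_le_iff_of_nonneg hr]
  exact h

theorem gap_mul_norm_le_norm_mul_diagonal_sub_diagonal_mul (X : Matrix ι ι ℝ) {β γ : ι → ℝ}
    {a b : ℝ} (hβ : ∀ k, a ≤ β k) (hγ : ∀ k, γ k ≤ b) :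
    (a - b) * ‖X‖ ≤ ‖X * diagonal β - diagonal γ * X‖ := by
  obtain ⟨M, hM⟩ := Finite.exists_le fun k => |β k| + |γ k|
  set K := |M| + |a| + |b|
  have hK : ∀ k, |β k| + |γ k| + |a| + |b| ≤ K := fun k => by linarith [hM k, le_abs_self M]
  have := abs_nonneg a
  have := abs_nonneg b
  have hβK (k : ι) : |β k - (a + K) / 2| ≤ (K - a) / 2 := by
    rw [abs_le]
    constructor <;> linarith [hK k, hβ k, le_abs_self (β k), abs_nonneg (γ k)]
  have hγK (k : ι) : |γ k - (b - K) / 2| ≤ (b + K) / 2 := by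
    rw [abs_le]
    constructor <;> linarith [hK k, hγ k, neg_abs_le (γ k), abs_nonneg (β k)]
  have h := norm_mul_le_norm_mul_sub_mul X _ _
    (norm_diagonal_sub_algebraMap_le (by linarith [abs_nonneg M, le_abs_self a]) hβK)
    (norm_diagonal_sub_algebraMap_le (by linarith [abs_nonneg M, neg_abs_le b]) hγK)
  convert h using 2
  ring

theorem norm_diagonal_ite_le_one (S : ι → Prop) [DecidablePred S] :
    ‖(diagonal fun k => if S k then 1 else 0 : Matrix ι ι ℝ)‖ ≤ 1 := by
  rw [l2_opNorm_diagonal, pi_norm_le_iff_of_nonneg zero_le_one]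
  intro k
  split_ifs <;> simp

theorem diagonal_ite_mul_diagonal_ite (S T : ι → Prop) [DecidablePred S] [DecidablePred T] :
    (diagonal fun k => if S k then 1 else 0 : Matrix ι ι ℝ) *
        diagonal (fun k => if T k then 1 else 0) =
      diagonal fun k => if S k ∧ T k then 1 else 0 := by
  rw [diagonal_mul_diagonal]
  congr 1
  funext k
  by_cases S k <;> by_cases T k <;> simp [*]

theorem transpose_mem_orthogonalGroup {V : Matrix ι ι ℝ} (hV : V ∈ orthogonalGroup ι ℝ) :
    Vᵀ ∈ orthogonalGroup ι ℝ := by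
  rw [mem_orthogonalGroup_iff, transpose_transpose]
  exact (mem_orthogonalGroup_iff' ι ℝ).mp hV

theorem dotProduct_mulVec_eq_sum_mul_sq {V A : Matrix ι ι ℝ} {d : ι → ℝ}
    (hA : A = Vᵀ * diagonal d * V) (x : ι → ℝ) :
    x ⬝ᵥ (A *ᵥ x) = ∑ k, d k * (V *ᵥ x) k ^ 2 := by
  rw [hA, ← mulVec_mulVec, ← mulVec_mulVec, dotProduct_mulVec, vecMul_transpose, dotProduct]
  simp only [mulVec_diagonal]
  exact Finset.sum_congr rfl fun k _ => by ring

theorem dotProduct_self_eq_sum_sq {V : Matrix ι ι ℝ} (hV : V ∈ orthogonalGroup ι ℝ)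
    (x : ι → ℝ) : x ⬝ᵥ x = ∑ k, (V *ᵥ x) k ^ 2 := by
  have h := dotProduct_mulVec_eq_sum_mul_sq (V := V) (A := 1) (d := fun _ => 1)
    (by rw [diagonal_one, mul_one, (mem_orthogonalGroup_iff' ι ℝ).mp hV]) x
  simpa using h

theorem neg_norm_mul_le_dotProduct_mulVec (M : Matrix ι ι ℝ) (x : ι → ℝ) :
    -(‖M‖ * (x ⬝ᵥ x)) ≤ x ⬝ᵥ (M *ᵥ x) := by
  set y : EuclideanSpace ℝ ι := WithLp.toLp 2 x
  set My := (EuclideanSpace.equiv ι ℝ).symm (M *ᵥ y.ofLp)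
  have hxx : x ⬝ᵥ x = ‖y‖ ^ 2 := by
    rw [← real_inner_self_eq_norm_sq, EuclideanSpace.inner_eq_star_dotProduct]; simp [y]
  have hxMx : x ⬝ᵥ (M *ᵥ x) = inner ℝ y My := by
    rw [EuclideanSpace.inner_eq_star_dotProduct]; simp [y, My, dotProduct_comm]
  rw [hxx, hxMx]
  nlinarith [abs_le.mp (abs_real_inner_le_norm y My), l2_opNorm_mulVec M y, norm_nonneg y]

def rowProj (V : Matrix ι ι ℝ) (S : ι → Prop) [DecidablePred S] : Matrix ι ι ℝ :=
  Vᵀ * diagonal (fun k => if S k then 1 else 0) * V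

theorem rowProj_eq_sum (V : Matrix ι ι ℝ) (S : ι → Prop) [DecidablePred S] :
    rowProj V S = ∑ k, if S k then vecMulVec (V k) (V k) else 0 := by
  ext a b
  simp only [rowProj, mul_apply, diagonal_apply, transpose_apply, sum_apply]
  refine Finset.sum_congr rfl fun k _ => ?_
  split_ifs <;> simp [Finset.sum_ite_eq', vecMulVec_apply, *]

variable {V W : Matrix ι ι ℝ} (S T : ι → Prop) [DecidablePred S] [DecidablePred T]

theorem isStarProjection_rowProj (hV : V ∈ orthogonalGroup ι ℝ) :
    IsStarProjection (rowProj V S) where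
  isIdempotentElem := by
    simp only [IsIdempotentElem, rowProj]
    calc _ = Vᵀ * (diagonal (fun k => if S k then 1 else 0) * (V * Vᵀ) *
          diagonal (fun k => if S k then 1 else 0)) * V := by simp only [mul_assoc]
      _ = _ := by
          rw [(mem_orthogonalGroup_iff ι ℝ).mp hV, mul_one, diagonal_ite_mul_diagonal_ite]
          simp only [and_self]
  isSelfAdjoint := by
    rw [IsSelfAdjoint, star_eq_conjTranspose, conjTranspose_eq_transpose_of_trivial, rowProj]
    simp only [transpose_mul, transpose_transpose, diagonal_transpose, mul_assoc]

theorem one_sub_rowProj (hV : V ∈ orthogonalGroup ι ℝ) :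
    1 - rowProj V S = rowProj V (fun k => ¬ S k) := by
  have hone : (1 : Matrix ι ι ℝ) - diagonal (fun k => if S k then 1 else 0)
      = diagonal fun k => if ¬ S k then 1 else 0 := by
    rw [← diagonal_one, diagonal_sub]
    congr 1
    funext k
    split_ifs <;> simp
  rw [rowProj, rowProj, ← hone, mul_sub, sub_mul, mul_one, (mem_orthogonalGroup_iff' ι ℝ).mp hV]

theorem norm_rowProj_sub_rowProj_le_one (hV : V ∈ orthogonalGroup ι ℝ)
    (hW : W ∈ orthogonalGroup ι ℝ) : ‖rowProj W T - rowProj V S‖ ≤ 1 := by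
  rw [cstar_norm_def, map_sub]
  exact ContinuousLinearMap.norm_sub_le_one_of_isStarProjection
    ((isStarProjection_rowProj S hV).map _) ((isStarProjection_rowProj T hW).map _)

theorem gap_mul_norm_rowProj_mul_rowProj_le {A B : Matrix ι ι ℝ} {d e : ι → ℝ}
    (hV : V ∈ orthogonalGroup ι ℝ) (hW : W ∈ orthogonalGroup ι ℝ)
    (hA : A = Vᵀ * diagonal d * V) (hB : B = Wᵀ * diagonal e * W) {a b : ℝ}
    (hS : ∀ k, S k → d k ≤ b) (hT : ∀ k, T k → a ≤ e k) :
    (a - b) * ‖rowProj V S * rowProj W T‖ ≤ ‖B - A‖ := by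
  set χS : Matrix ι ι ℝ := diagonal fun k => if S k then 1 else 0
  set χT : Matrix ι ι ℝ := diagonal fun k => if T k then 1 else 0
  set R := χS * (V * Wᵀ) * χT
  have hVt : Vᵀ ∈ orthogonalGroup ι ℝ := transpose_mem_orthogonalGroup hV
  have hWt : Wᵀ ∈ orthogonalGroup ι ℝ := transpose_mem_orthogonalGroup hW
  have hnormR : ‖rowProj V S * rowProj W T‖ = ‖R‖ := by
    have : rowProj V S * rowProj W T = Vᵀ * R * W := by
      simp only [rowProj, R, χS, χT, mul_assoc]
    rw [this, CStarRing.norm_mul_mem_unitary _ hW, CStarRing.norm_mem_unitary_mul _ hVt]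
  have hVA : diagonal d * V = V * A := by
    rw [hA, ← mul_assoc, ← mul_assoc, (mem_orthogonalGroup_iff ι ℝ).mp hV, one_mul]
  have hWB : Wᵀ * diagonal e = B * Wᵀ := by
    rw [hB, mul_assoc, mul_assoc, (mem_orthogonalGroup_iff ι ℝ).mp hW, mul_one]
  -- Eigenvalues outside `T` and `S` are invisible to `R`; moving them to `a` and `b` separates
  -- the two diagonals.
  set β : ι → ℝ := fun k => if T k then e k else a
  set γ : ι → ℝ := fun k => if S k then d k else b
  have hsyl : R * diagonal β - diagonal γ * R = χS * (V * (B - A) * Wᵀ) * χT := by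
    have hχT : χT * diagonal β = diagonal e * χT := by
      simp only [χT, β, diagonal_mul_diagonal]
      congr 1; funext k; split_ifs <;> simp
    have hχS : diagonal γ * χS = χS * diagonal d := by
      simp only [χS, γ, diagonal_mul_diagonal]
      congr 1; funext k; split_ifs <;> simp
    calc _ = χS * V * Wᵀ * (χT * diagonal β) - (diagonal γ * χS) * V * Wᵀ * χT := by
          simp only [R, mul_assoc]
      _ = χS * V * (Wᵀ * diagonal e) * χT - χS * (diagonal d * V) * Wᵀ * χT := by
          rw [hχT, hχS]; simp only [mul_assoc]
      _ = _ := by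
          rw [hWB, hVA]; simp only [mul_sub, sub_mul, mul_assoc]
  have hG : ‖χS * (V * (B - A) * Wᵀ) * χT‖ ≤ ‖B - A‖ :=
    calc _ ≤ ‖χS‖ * ‖V * (B - A) * Wᵀ‖ * ‖χT‖ := norm_mul₃_le
      _ ≤ 1 * ‖V * (B - A) * Wᵀ‖ * 1 := by
          gcongr
          exacts [norm_diagonal_ite_le_one S, norm_diagonal_ite_le_one T]
      _ = ‖B - A‖ := by
          rw [one_mul, mul_one, CStarRing.norm_mul_mem_unitary _ hWt,
            CStarRing.norm_mem_unitary_mul _ hV]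
  rw [hnormR]
  refine (gap_mul_norm_le_norm_mul_diagonal_sub_diagonal_mul R (fun k => ?_) (fun k => ?_)).trans
    (hsyl ▸ hG)
  · by_cases hk : T k
    · simpa [β, hk] using hT k hk
    · simp [β, hk]
  · by_cases hk : S k
    · simpa [γ, hk] using hS k hk
    · simp [γ, hk]

end Diagonalization

section Ordered

variable {ι : Type*} [Fintype ι] [LinearOrder ι]

theorem exists_ne_zero_mulVec_eq_zero_of_lt (V W : Matrix ι ι ℝ) (i : ι) :
    ∃ x ≠ 0, (∀ k, i < k → (V *ᵥ x) k = 0) ∧ (∀ k, k < i → (W *ᵥ x) k = 0) := by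
  -- `L` collects all the constraints and has a zero row, so it is singular.
  set L : Matrix ι ι ℝ := of fun k => if k = i then 0 else if i < k then V k else W k
  obtain ⟨x, hx0, hLx⟩ := exists_mulVec_eq_zero_iff.mpr
    (det_eq_zero_of_row_eq_zero (A := L) i fun j => by simp [L])
  refine ⟨x, hx0, fun k hk => ?_, fun k hk => ?_⟩
  · simpa [L, mulVec, hk.ne', hk] using congrFun hLx k
  · simpa [L, mulVec, hk.ne, hk.not_gt] using congrFun hLx k

variable {V W A B : Matrix ι ι ℝ} {d e : ι → ℝ}

theorem weyl_inequality (hV : V ∈ orthogonalGroup ι ℝ) (hW : W ∈ orthogonalGroup ι ℝ)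
    (hA : A = Vᵀ * diagonal d * V) (hB : B = Wᵀ * diagonal e * W)
    (hd : Antitone d) (he : Antitone e) (i : ι) :
    d i - ‖B - A‖ ≤ e i := by
  obtain ⟨x, hx0, hVx, hWx⟩ := exists_ne_zero_mulVec_eq_zero_of_lt V W i
  have hAx : d i * (x ⬝ᵥ x) ≤ x ⬝ᵥ (A *ᵥ x) := by
    rw [dotProduct_self_eq_sum_sq hV, dotProduct_mulVec_eq_sum_mul_sq hA, Finset.mul_sum]
    refine Finset.sum_le_sum fun k _ => ?_
    rcases lt_or_ge i k with hk | hk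
    · simp [hVx k hk]
    · exact mul_le_mul_of_nonneg_right (hd hk) (sq_nonneg _)
  have hBx : x ⬝ᵥ (B *ᵥ x) ≤ e i * (x ⬝ᵥ x) := by
    rw [dotProduct_self_eq_sum_sq hW, dotProduct_mulVec_eq_sum_mul_sq hB, Finset.mul_sum]
    refine Finset.sum_le_sum fun k _ => ?_
    rcases lt_or_ge k i with hk | hk
    · simp [hWx k hk]
    · exact mul_le_mul_of_nonneg_right (he hk) (sq_nonneg _)
  have hBA := neg_norm_mul_le_dotProduct_mulVec (B - A) x
  rw [sub_mulVec, dotProduct_sub] at hBA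
  have hpos : 0 < x ⬝ᵥ x := lt_of_le_of_ne (Finset.sum_nonneg fun k _ => mul_self_nonneg (x k))
    (Ne.symm (dotProduct_self_eq_zero.not.mpr hx0))
  refine le_of_mul_le_mul_right ?_ hpos
  linarith

theorem norm_rowProj_sub_rowProj_le (hV : V ∈ orthogonalGroup ι ℝ)
    (hW : W ∈ orthogonalGroup ι ℝ) (hA : A = Vᵀ * diagonal d * V)
    (hB : B = Wᵀ * diagonal e * W) (hd : Antitone d) (he : Antitone e) {i j : ι} (hij : i ⋖ j)
    (hgap : 0 < d i - d j) :
    ‖rowProj W (· < j) - rowProj V (· < j)‖ ≤ Real.pi * ‖B - A‖ / (d i - d j) := by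
  set δ := d i - d j
  set ε := ‖B - A‖
  rcases le_or_gt δ (Real.pi * ε) with hlarge | hsmall
  · exact (norm_rowProj_sub_rowProj_le_one _ _ hV hW).trans ((one_le_div hgap).mpr hlarge)
  have hweyl_i := weyl_inequality hV hW hA hB hd he i
  have hweyl_j := weyl_inequality hW hV hB hA he hd j
  rw [norm_sub_rev] at hweyl_j
  have hsin₁ := gap_mul_norm_rowProj_mul_rowProj_le (fun k => ¬ k < j) (· < j) hV hW hA hB
    (fun k hk => hd (not_lt.mp hk)) (fun k hk => he (hij.le_of_lt hk))
  have hsin₂ := gap_mul_norm_rowProj_mul_rowProj_le (fun k => ¬ k < j) (· < j) hW hV hB hA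
    (fun k hk => he (not_lt.mp hk)) (fun k hk => hd (hij.le_of_lt hk))
  rw [norm_sub_rev] at hsin₂
  have hsplit := norm_sub_le_norm_one_sub_mul_add
    (isStarProjection_rowProj (· < j) hV).isSelfAdjoint
    (isStarProjection_rowProj (· < j) hW).isSelfAdjoint
  rw [one_sub_rowProj _ hV, one_sub_rowProj _ hW] at hsplit
  set s₁ := ‖rowProj V (fun k => ¬ k < j) * rowProj W (· < j)‖
  set s₂ := ‖rowProj W (fun k => ¬ k < j) * rowProj V (· < j)‖
  have h₁ : (δ - ε) * s₁ ≤ ε :=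
    (mul_le_mul_of_nonneg_right (by linarith) (norm_nonneg _)).trans hsin₁
  have h₂ : (δ - ε) * s₂ ≤ ε :=
    (mul_le_mul_of_nonneg_right (by linarith) (norm_nonneg _)).trans hsin₂
  have hε : 0 ≤ ε := norm_nonneg _
  have hπ := Real.pi_gt_three
  have hkey : 2 * δ ≤ Real.pi * (δ - ε) := by nlinarith [mul_pos (sub_pos.2 hπ) hgap]
  have hgap' : 0 < δ - ε := by nlinarith
  have hprod : (s₁ + s₂) * δ * (δ - ε) ≤ Real.pi * ε * (δ - ε) :=
    calc (s₁ + s₂) * δ * (δ - ε) = ((δ - ε) * s₁ + (δ - ε) * s₂) * δ := by ring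
      _ ≤ (ε + ε) * δ := by gcongr
      _ = ε * (2 * δ) := by ring
      _ ≤ ε * (Real.pi * (δ - ε)) := by gcongr
      _ = Real.pi * ε * (δ - ε) := by ring
  rw [le_div_iff₀ hgap]
  exact (mul_le_mul_of_nonneg_right hsplit hgap.le).trans (le_of_mul_le_mul_right hprod hgap')

end Ordered

end Matrix

theorem Finset.sum_Icc_one_eq_sum_fin {M : Type*} [AddCommMonoid M] {n p : ℕ} (hp : p ≤ n)
    (f : ℕ → M) :
    ∑ i ∈ Finset.Icc 1 p, f i = ∑ k : Fin n, if (k : ℕ) < p then f (k + 1) else 0 := by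
  have hfilter : (Finset.range n).filter (· < p) = Finset.range p := by
    ext k; simp only [Finset.mem_filter, Finset.mem_range]; omega
  rw [Fin.sum_univ_eq_sum_range (fun k => if k < p then f (k + 1) else 0), ← Finset.sum_filter,
    hfilter, Finset.range_eq_Ico, Finset.sum_Ico_add', zero_add, Finset.Ico_add_one_right_eq_Icc]

section Eigenbasis

variable {n : ℕ}

def eigenRows (u : ℕ → Fin n → ℝ) : Matrix (Fin n) (Fin n) ℝ := of fun k => u ((k : ℕ) + 1)

theorem sum_vecMulVec_eq_rowProj_eigenRows {p : ℕ} (hp : p ≤ n) (u : ℕ → Fin n → ℝ) :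
    ∑ i ∈ Finset.Icc 1 p, vecMulVec (u i) (u i) =
      rowProj (eigenRows u) (fun k => (k : ℕ) < p) := by
  rw [Finset.sum_Icc_one_eq_sum_fin hp, rowProj_eq_sum]
  rfl

theorem antitone_fin_succ {lam : ℕ → ℝ}
    (h : ∀ i ∈ Finset.Icc 1 n, ∀ j ∈ Finset.Icc 1 n, i ≤ j → lam j ≤ lam i) :
    Antitone fun k : Fin n => lam ((k : ℕ) + 1) := fun k l hkl =>
  h _ (by simp) _ (by simp) (by simpa using hkl)

variable {u : ℕ → Fin n → ℝ}

theorem eigenRows_mem_orthogonalGroup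
    (hu : ∀ i ∈ Finset.Icc 1 n, ∀ j ∈ Finset.Icc 1 n, u i ⬝ᵥ u j = if i = j then 1 else 0) :
    eigenRows u ∈ orthogonalGroup (Fin n) ℝ := by
  rw [mem_orthogonalGroup_iff]
  ext k l
  have := hu (k + 1) (by simp) (l + 1) (by simp)
  simp only [mul_apply, transpose_apply, eigenRows, of_apply, one_apply, Fin.ext_iff]
  simpa [dotProduct] using this

theorem eq_transpose_eigenRows_mul_diagonal_mul {A : Matrix (Fin n) (Fin n) ℝ} {lam : ℕ → ℝ}
    (hu : ∀ i ∈ Finset.Icc 1 n, ∀ j ∈ Finset.Icc 1 n, u i ⬝ᵥ u j = if i = j then 1 else 0)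
    (hA : ∀ i ∈ Finset.Icc 1 n, A *ᵥ u i = lam i • u i) :
    A = (eigenRows u)ᵀ * diagonal (fun k : Fin n => lam ((k : ℕ) + 1)) * eigenRows u := by
  have hcols : A * (eigenRows u)ᵀ =
      (eigenRows u)ᵀ * diagonal (fun k : Fin n => lam ((k : ℕ) + 1)) := by
    ext a k
    have := congrFun (hA (k + 1) (by simp)) a
    simp only [mulVec, dotProduct, Pi.smul_apply, smul_eq_mul] at this
    simp [mul_apply, eigenRows, diagonal_apply, this, mul_comm]
  rw [← hcols, mul_assoc, (mem_orthogonalGroup_iff' _ ℝ).mp (eigenRows_mem_orthogonalGroup hu),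
    mul_one]

end Eigenbasis

theorem davis_kahan_leading_general
    {n : ℕ} (A E : Matrix (Fin n) (Fin n) ℝ)
    (lam tlam : ℕ → ℝ) (u tu : ℕ → (Fin n → ℝ))
    (hlam_mono : ∀ i ∈ Finset.Icc 1 n, ∀ j ∈ Finset.Icc 1 n, i ≤ j → lam j ≤ lam i)
    (htlam_mono : ∀ i ∈ Finset.Icc 1 n, ∀ j ∈ Finset.Icc 1 n, i ≤ j → tlam j ≤ tlam i)
    (hu_on : ∀ i ∈ Finset.Icc 1 n, ∀ j ∈ Finset.Icc 1 n,
      u i ⬝ᵥ u j = if i = j then 1 else 0)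
    (htu_on : ∀ i ∈ Finset.Icc 1 n, ∀ j ∈ Finset.Icc 1 n,
      tu i ⬝ᵥ tu j = if i = j then 1 else 0)
    (hu_eig : ∀ i ∈ Finset.Icc 1 n, A *ᵥ u i = lam i • u i)
    (htu_eig : ∀ i ∈ Finset.Icc 1 n, (A + E) *ᵥ tu i = tlam i • tu i)
    (p : ℕ) (hp1 : 1 ≤ p) (hpn : p < n)
    (δp : ℝ) (hδp : δp = lam p - lam (p + 1)) (hδp_pos : 0 < δp) :
    specNorm ((∑ i ∈ Finset.Icc 1 p, vecMulVec (tu i) (tu i))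
        - ∑ i ∈ Finset.Icc 1 p, vecMulVec (u i) (u i))
      ≤ Real.pi * specNorm E / δp := by
  have hcov : (⟨p - 1, by omega⟩ : Fin n) ⋖ ⟨p, hpn⟩ :=
    Fin.covBy_iff.mpr (Nat.covBy_iff_add_one_eq.mpr (by simp only; omega))
  have hδ : δp = lam (p - 1 + 1) - lam (p + 1) := by rw [hδp, Nat.sub_add_cancel hp1]
  have h := norm_rowProj_sub_rowProj_le (eigenRows_mem_orthogonalGroup hu_on)
    (eigenRows_mem_orthogonalGroup htu_on) (eq_transpose_eigenRows_mul_diagonal_mul hu_on hu_eig)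
    (eq_transpose_eigenRows_mul_diagonal_mul htu_on htu_eig) (antitone_fin_succ hlam_mono)
    (antitone_fin_succ htlam_mono) hcov (hδ ▸ hδp_pos)
  rw [add_sub_cancel_left, ← hδ] at h
  rwa [sum_vecMulVec_eq_rowProj_eigenRows hpn.le, sum_vecMulVec_eq_rowProj_eigenRows hpn.le]

/-- **Davis–Kahan for the leading `p`-eigenspace.**  If `δ_p := λ_p − λ_{p+1} > 0`,
then `‖Π̃_p − Π_p‖ ≤ π‖E‖/δ_p`. (Indices are 1-based.) -/
theorem davis_kahan_leading
    {n : ℕ} (A E : Matrix (Fin n) (Fin n) ℝ) (hA : A.IsSymm) (hE : E.IsSymm)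
    (lam tlam : ℕ → ℝ) (u tu : ℕ → (Fin n → ℝ))
    (hlam_mono : ∀ i ∈ Finset.Icc 1 n, ∀ j ∈ Finset.Icc 1 n, i ≤ j → lam j ≤ lam i)
    (htlam_mono : ∀ i ∈ Finset.Icc 1 n, ∀ j ∈ Finset.Icc 1 n, i ≤ j → tlam j ≤ tlam i)
    (hu_on : ∀ i ∈ Finset.Icc 1 n, ∀ j ∈ Finset.Icc 1 n,
      u i ⬝ᵥ u j = if i = j then 1 else 0)
    (htu_on : ∀ i ∈ Finset.Icc 1 n, ∀ j ∈ Finset.Icc 1 n,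
      tu i ⬝ᵥ tu j = if i = j then 1 else 0)
    (hu_eig : ∀ i ∈ Finset.Icc 1 n, A *ᵥ u i = lam i • u i)
    (htu_eig : ∀ i ∈ Finset.Icc 1 n, (A + E) *ᵥ tu i = tlam i • tu i)
    (p : ℕ) (hp1 : 1 ≤ p) (hpn : p < n)
    (δp : ℝ) (hδp : δp = lam p - lam (p + 1)) (hδp_pos : 0 < δp) :
    specNorm ((∑ i ∈ Finset.Icc 1 p, vecMulVec (tu i) (tu i))
        - ∑ i ∈ Finset.Icc 1 p, vecMulVec (u i) (u i))
      ≤ Real.pi * specNorm E / δp :=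
  davis_kahan_leading_general A E lam tlam u tu hlam_mono htlam_mono hu_on htu_on hu_eig htu_eig p
    hp1 hpn δp hδp hδp_pos
end

section
/- Let A be an n×n real symmetric matrix with largest eigenvalue λ₁, E an n×n real matrix, T > 0, and x₁ a real number with x₁ > λ₁. Then ∫_{−T}^{T} ‖((x₁+it)I − A)⁻¹ E ((x₁+it)I − A)⁻¹‖ dt ≤ 4‖E‖/(x₁ − λ₁). -/
open Matrix

/-- The resolvent `(zI − A)⁻¹` of a real matrix `A`, regarded as a complex matrix. -/
noncomputable def res {n : ℕ} (A : Matrix (Fin n) (Fin n) ℝ) (z : ℂ) :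
    Matrix (Fin n) (Fin n) ℂ :=
  (z • (1 : Matrix (Fin n) (Fin n) ℂ) - A.map Complex.ofReal)⁻¹

/-!
The orthonormal eigenvectors form a unitary `W` with `A W = W diag(λ)`, so
`(zI − A)⁻¹ = W diag((z − λᵢ)⁻¹) W*` has spectral norm `maxᵢ |z − λᵢ|⁻¹`, which on the line
`z = x₁ + it` is at most `((x₁ − λ₁)² + t²)^(-1/2)`. The integrand is therefore at most
`‖E‖ / ((x₁ − λ₁)² + t²)`, whose integral over the whole line is `π ‖E‖ / (x₁ − λ₁)`.
-/

open scoped Matrix.Norms.L2Operator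
open Complex

theorem specNorm_eq_l2_opNorm {𝕜 : Type*} [RCLike 𝕜] {m n : ℕ}
    (M : Matrix (Fin m) (Fin n) 𝕜) : specNorm M = ‖M‖ := rfl

theorem EuclideanSpace.norm_sq_eq_norm_sq_re_add_norm_sq_im {ι : Type*} [Fintype ι]
    (v : EuclideanSpace ℂ ι) :
    ‖v‖ ^ 2 =
      ‖WithLp.toLp 2 (fun i => (v i).re)‖ ^ 2 + ‖WithLp.toLp 2 (fun i => (v i).im)‖ ^ 2 := by
  simp only [EuclideanSpace.norm_sq_eq, ← Finset.sum_add_distrib, Complex.sq_norm,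
    Complex.normSq_apply, Real.norm_eq_abs, sq_abs]
  simp [sq]

theorem Matrix.l2_opNorm_map_ofReal_le {m n : Type*} [Fintype m] [Fintype n] [DecidableEq n]
    (E : Matrix m n ℝ) : ‖E.map ofReal‖ ≤ ‖E‖ := by
  rw [l2_opNorm_def]
  refine ContinuousLinearMap.opNorm_le_bound _ (norm_nonneg E) fun v => ?_
  set x : EuclideanSpace ℝ n := WithLp.toLp 2 (fun i => (v i).re)
  set y : EuclideanSpace ℝ n := WithLp.toLp 2 (fun i => (v i).im)
  set w : EuclideanSpace ℂ m := WithLp.toLp 2 (E.map ofReal *ᵥ v)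
  have hre : WithLp.toLp 2 (fun j => (w j).re) = WithLp.toLp 2 (E *ᵥ x) := by
    ext j; simp [w, x, mulVec, dotProduct]
  have him : WithLp.toLp 2 (fun j => (w j).im) = WithLp.toLp 2 (E *ᵥ y) := by
    ext j; simp [w, y, mulVec, dotProduct]
  have hx : ‖WithLp.toLp 2 (E *ᵥ x)‖ ≤ ‖E‖ * ‖x‖ := E.l2_opNorm_mulVec x
  have hy : ‖WithLp.toLp 2 (E *ᵥ y)‖ ≤ ‖E‖ * ‖y‖ := E.l2_opNorm_mulVec y
  change ‖w‖ ≤ ‖E‖ * ‖v‖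
  refine le_of_sq_le_sq ?_ (by positivity)
  calc ‖w‖ ^ 2 = ‖WithLp.toLp 2 (E *ᵥ x)‖ ^ 2 + ‖WithLp.toLp 2 (E *ᵥ y)‖ ^ 2 := by
        rw [EuclideanSpace.norm_sq_eq_norm_sq_re_add_norm_sq_im, hre, him]
    _ ≤ (‖E‖ * ‖x‖) ^ 2 + (‖E‖ * ‖y‖) ^ 2 := by gcongr
    _ = (‖E‖ * ‖v‖) ^ 2 := by
        rw [mul_pow, mul_pow, mul_pow, EuclideanSpace.norm_sq_eq_norm_sq_re_add_norm_sq_im v]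
        ring

section Diagonalization

variable {ι : Type*} [Fintype ι] [DecidableEq ι]

theorem mem_unitaryGroup_of_orthonormal (v : ι → ι → ℝ)
    (hv : ∀ i j, v i ⬝ᵥ v j = if i = j then 1 else 0) :
    (of v)ᵀ.map ofReal ∈ unitaryGroup ι ℂ := by
  rw [mem_unitaryGroup_iff']
  ext i j
  have h := congrArg ((↑) : ℝ → ℂ) (hv i j)
  simp only [dotProduct, ofReal_sum, ofReal_mul] at h
  simp [mul_apply, h, one_apply, apply_ite]

theorem map_ofReal_mul_eq_mul_diagonal_of_eigenvectors (A : Matrix ι ι ℝ) (v : ι → ι → ℝ)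
    (d : ι → ℝ) (hv : ∀ i, A *ᵥ v i = d i • v i) :
    A.map ofReal * (of v)ᵀ.map ofReal = (of v)ᵀ.map ofReal * diagonal (fun i => (d i : ℂ)) := by
  ext k i
  have h := congrArg ((↑) : ℝ → ℂ) (congrFun (hv i) k)
  simp only [mulVec, dotProduct, Pi.smul_apply, smul_eq_mul, ofReal_sum, ofReal_mul] at h
  rw [mul_diagonal]
  simp [mul_apply, h, mul_comm]

theorem inv_smul_one_sub_eq_of_mul_eq_mul_diagonal {B W : Matrix ι ι ℂ} {d : ι → ℂ}
    (hW : W ∈ unitaryGroup ι ℂ) (hBW : B * W = W * diagonal d) {z : ℂ} (hz : ∀ i, z ≠ d i) :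
    (z • 1 - B)⁻¹ = W * diagonal (fun i => (z - d i)⁻¹) * star W := by
  have hB : B = W * diagonal d * star W := by
    rw [← hBW, mul_assoc, mem_unitaryGroup_iff.mp hW, mul_one]
  have hzB : z • 1 - B = W * diagonal (fun i => z - d i) * star W := by
    rw [hB, ← diagonal_sub, mul_sub, sub_mul, ← smul_one_eq_diagonal, mul_smul_one, smul_mul,
      mem_unitaryGroup_iff.mp hW]
  rw [hzB]
  refine inv_eq_right_inv ?_
  calc W * diagonal (fun i => z - d i) * star W * (W * diagonal (fun i => (z - d i)⁻¹) * star W)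
      = W * (diagonal (fun i => z - d i) * (star W * W) * diagonal (fun i => (z - d i)⁻¹))
          * star W := by
        simp only [mul_assoc]
    _ = 1 := by
        rw [mem_unitaryGroup_iff'.mp hW, mul_one, diagonal_mul_diagonal]
        simp [sub_ne_zero.mpr (hz _), mem_unitaryGroup_iff.mp hW]

theorem l2_opNorm_inv_smul_one_sub_of_mul_eq_mul_diagonal {B W : Matrix ι ι ℂ} {d : ι → ℂ}
    (hW : W ∈ unitaryGroup ι ℂ) (hBW : B * W = W * diagonal d) {z : ℂ} (hz : ∀ i, z ≠ d i) :
    ‖(z • 1 - B)⁻¹‖ = ‖fun i => (z - d i)⁻¹‖ := by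
  rw [inv_smul_one_sub_eq_of_mul_eq_mul_diagonal hW hBW hz,
    CStarRing.norm_mul_mem_unitary _ (Unitary.star_mem hW), CStarRing.norm_mem_unitary_mul _ hW,
    l2_opNorm_diagonal]

end Diagonalization

theorem norm_inv_add_mul_I_sub_le {x t d μ : ℝ} (hd : d ≤ μ) (hμ : μ < x) :
    ‖((x : ℂ) + t * I - d)⁻¹‖ ≤ (√((x - μ) ^ 2 + t ^ 2))⁻¹ := by
  have hz : (x : ℂ) + t * I - d = ((x - d : ℝ) : ℂ) + t * I := by push_cast; ring
  rw [norm_inv, hz, norm_add_mul_I]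
  gcongr

theorem Real.arctan_sub_arctan_lt_pi (x y : ℝ) : Real.arctan x - Real.arctan y < Real.pi := by
  linarith [Real.arctan_lt_pi_div_two x, Real.neg_pi_div_two_lt_arctan y]

theorem intervalIntegral.integral_mono_of_nonneg {f g : ℝ → ℝ} {a b : ℝ} (hab : a ≤ b)
    (hf : ∀ t, 0 ≤ f t) (hg : IntervalIntegrable g MeasureTheory.volume a b)
    (h : ∀ t, f t ≤ g t) : ∫ t in a..b, f t ≤ ∫ t in a..b, g t := by
  simp only [intervalIntegral.integral_of_le hab]
  exact MeasureTheory.integral_mono_of_nonneg (.of_forall hf) hg.1 (.of_forall h)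

theorem l2_opNorm_res_le {n : ℕ} {A : Matrix (Fin n) (Fin n) ℝ} {W : Matrix (Fin n) (Fin n) ℂ}
    {d : Fin n → ℝ} (hW : W ∈ unitaryGroup (Fin n) ℂ)
    (hAW : A.map ofReal * W = W * diagonal (fun i => (d i : ℂ))) {μ x : ℝ} (hd : ∀ i, d i ≤ μ)
    (hμ : μ < x) (t : ℝ) : ‖res A (x + t * I)‖ ≤ (√((x - μ) ^ 2 + t ^ 2))⁻¹ := by
  have hz : ∀ i, (x : ℂ) + t * I ≠ d i := fun i h => by
    have hre := congrArg re h
    simp only [add_re, ofReal_re, mul_re, ofReal_im, I_re, I_im] at hre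
    linarith [hd i]
  rw [res, l2_opNorm_inv_smul_one_sub_of_mul_eq_mul_diagonal hW hAW hz]
  exact (pi_norm_le_iff_of_nonneg (by positivity)).2 fun i => norm_inv_add_mul_I_sub_le (hd i) hμ

theorem specNorm_res_mul_map_mul_res_le {n : ℕ} {A : Matrix (Fin n) (Fin n) ℝ}
    {W : Matrix (Fin n) (Fin n) ℂ} {d : Fin n → ℝ} (hW : W ∈ unitaryGroup (Fin n) ℂ)
    (hAW : A.map ofReal * W = W * diagonal (fun i => (d i : ℂ))) {μ x : ℝ} (hd : ∀ i, d i ≤ μ)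
    (hμ : μ < x) (E : Matrix (Fin n) (Fin n) ℝ) (t : ℝ) :
    specNorm (res A (x + t * I) * E.map ofReal * res A (x + t * I)) ≤
      specNorm E * ((x - μ) ^ 2 + t ^ 2)⁻¹ := by
  set R := res A (x + t * I)
  set c := (√((x - μ) ^ 2 + t ^ 2))⁻¹
  have hR : ‖R‖ ≤ c := l2_opNorm_res_le hW hAW hd hμ t
  rw [specNorm_eq_l2_opNorm, specNorm_eq_l2_opNorm]
  calc ‖R * E.map ofReal * R‖ ≤ ‖R‖ * ‖E.map ofReal‖ * ‖R‖ :=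
        (l2_opNorm_mul _ _).trans (by gcongr; exact l2_opNorm_mul _ _)
    _ ≤ c * ‖E‖ * c := by gcongr; exact l2_opNorm_map_ofReal_le E
    _ = ‖E‖ * ((x - μ) ^ 2 + t ^ 2)⁻¹ := by
        rw [mul_comm c, mul_assoc, ← mul_inv, Real.mul_self_sqrt (by positivity)]

theorem M3_bound_general
    {n : ℕ} (A E : Matrix (Fin n) (Fin n) ℝ)
    (lam : ℕ → ℝ) (u : ℕ → (Fin n → ℝ))
    (hlam_mono : ∀ i ∈ Finset.Icc 1 n, ∀ j ∈ Finset.Icc 1 n, i ≤ j → lam j ≤ lam i)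
    (hu_on : ∀ i ∈ Finset.Icc 1 n, ∀ j ∈ Finset.Icc 1 n,
      u i ⬝ᵥ u j = if i = j then 1 else 0)
    (hu_eig : ∀ i ∈ Finset.Icc 1 n, A *ᵥ u i = lam i • u i)
    (T : ℝ) (hT : 0 < T) (x₁ : ℝ) (hx₁ : lam 1 < x₁) :
    (∫ t in (-T)..T, specNorm
      (res A (x₁ + t * Complex.I) * E.map Complex.ofReal
        * res A (x₁ + t * Complex.I)))
      ≤ 4 * specNorm E / (x₁ - lam 1) := by
  have hmem : ∀ i : Fin n, (i : ℕ) + 1 ∈ Finset.Icc 1 n := fun i => by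
    simp [Finset.mem_Icc, Nat.succ_le_of_lt i.2]
  have hW := mem_unitaryGroup_of_orthonormal (fun i : Fin n => u (i + 1)) fun i j => by
    simpa [Fin.ext_iff] using hu_on _ (hmem i) _ (hmem j)
  have hAW := map_ofReal_mul_eq_mul_diagonal_of_eigenvectors A (fun i : Fin n => u (i + 1))
    (fun i => lam (i + 1)) fun i => hu_eig _ (hmem i)
  have hd : ∀ i : Fin n, lam (i + 1) ≤ lam 1 := fun i =>
    hlam_mono 1 (hmem ⟨0, i.pos⟩) _ (hmem i) (by simp)
  set a := x₁ - lam 1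
  have ha : 0 < a := sub_pos.mpr hx₁
  have hbound_int : IntervalIntegrable (fun t => specNorm E * (a ^ 2 + t ^ 2)⁻¹)
      MeasureTheory.volume (-T) T :=
    (continuous_const.mul (Continuous.inv₀ (by fun_prop) fun t =>
      (add_pos_of_pos_of_nonneg (pow_pos ha 2) (sq_nonneg t)).ne')).intervalIntegrable _ _
  calc (∫ t in (-T)..T, specNorm (res A (x₁ + t * I) * E.map ofReal * res A (x₁ + t * I)))
      ≤ ∫ t in (-T)..T, specNorm E * (a ^ 2 + t ^ 2)⁻¹ :=
        intervalIntegral.integral_mono_of_nonneg (by linarith) (fun _ => norm_nonneg _)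
          hbound_int (specNorm_res_mul_map_mul_res_le hW hAW hd hx₁ E)
    _ = specNorm E * a⁻¹ * (Real.arctan (T / a) - Real.arctan (-T / a)) := by
        rw [intervalIntegral.integral_const_mul, integral_inv_sq_add_sq ha.ne', mul_assoc]
    _ ≤ specNorm E * a⁻¹ * 4 := by
        gcongr
        · exact mul_nonneg (norm_nonneg _) (inv_nonneg.mpr ha.le)
        · exact (Real.arctan_sub_arctan_lt_pi _ _).le.trans Real.pi_le_four
    _ = 4 * specNorm E / a := by ring

/-- **Bound on the right vertical segment `M₃`** (Lemma 4.3 of the paper).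
Indices are 1-based, so `lam 1` is the largest eigenvalue of `A`. -/
theorem M3_bound
    {n : ℕ} (hn : 1 ≤ n) (A E : Matrix (Fin n) (Fin n) ℝ) (hA : A.IsSymm)
    (lam : ℕ → ℝ) (u : ℕ → (Fin n → ℝ))
    (hlam_mono : ∀ i ∈ Finset.Icc 1 n, ∀ j ∈ Finset.Icc 1 n, i ≤ j → lam j ≤ lam i)
    (hu_on : ∀ i ∈ Finset.Icc 1 n, ∀ j ∈ Finset.Icc 1 n,
      u i ⬝ᵥ u j = if i = j then 1 else 0)
    (hu_eig : ∀ i ∈ Finset.Icc 1 n, A *ᵥ u i = lam i • u i)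
    (T : ℝ) (hT : 0 < T) (x₁ : ℝ) (hx₁ : lam 1 < x₁) :
    (∫ t in (-T)..T, specNorm
      (res A (x₁ + t * Complex.I) * E.map Complex.ofReal
        * res A (x₁ + t * Complex.I)))
      ≤ 4 * specNorm E / (x₁ - lam 1) :=
  M3_bound_general A E lam u hlam_mono hu_on hu_eig T hT x₁ hx₁
end

section
/- Let 1 ≤ p < n, let r be an integer with p ≤ r < n such that |λ_p|/2 ≤ λ_p − λ_{r+1}, and assume 0 < 4‖E‖ ≤ δ_p := λ_p − λ_{p+1} ≤ |λ_p|/4. With x₀ = λ_p − δ_p/2 and T = 2σ₁, one has ∫_{−T}^{T} ‖ ( Σ_{r<i≤n} u_i u_iᵀ/(x₀+it−λ_i) ) E ( Σ_{r<j≤n} u_j u_jᵀ/(x₀+it−λ_j) ) ‖ dt ≤ 16‖E‖/|λ_p|. -/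
open Matrix

/-!
Write `z = x₀ + it`. The integrand is `‖R(z) E R(z)‖` for `R(z) = ∑_{i > r} (z - λᵢ)⁻¹ uᵢuᵢᵀ`, and
since the `uᵢ` are orthonormal, `‖R(z)‖ ≤ maxᵢ |z - λᵢ|⁻¹`. The gap hypotheses give
`x₀ - λᵢ ≥ d := 3|λ_p|/8` for `i > r`, so the integrand is at most `‖E‖ / (d² + t²)`, whose
integral over any interval is below `π‖E‖/d = 8π‖E‖/(3|λ_p|) ≤ 16‖E‖/|λ_p|`.
-/

open InnerProductSpace

section Orthonormal

variable {𝕜 E ι : Type*} [RCLike 𝕜] [NormedAddCommGroup E] [InnerProductSpace 𝕜 E]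
  {w : ι → E}

theorem Orthonormal.norm_sum_smul_sq (hw : Orthonormal 𝕜 w) (a : ι → 𝕜) (s : Finset ι) :
    ‖∑ i ∈ s, a i • w i‖ ^ 2 = ∑ i ∈ s, ‖a i‖ ^ 2 := by
  have : ((‖∑ i ∈ s, a i • w i‖ : ℝ) : 𝕜) ^ 2 = ∑ i ∈ s, ((‖a i‖ : ℝ) : 𝕜) ^ 2 := by
    simp only [← inner_self_eq_norm_sq_to_K, hw.inner_sum, RCLike.conj_mul]
  exact_mod_cast this

theorem Orthonormal.norm_sum_smul_rankOne_le (hw : Orthonormal 𝕜 w) (s : Finset ι)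
    {c : ι → 𝕜} {C : ℝ} (hC : 0 ≤ C) (hc : ∀ i ∈ s, ‖c i‖ ≤ C) :
    ‖∑ i ∈ s, c i • rankOne 𝕜 (w i) (w i)‖ ≤ C := by
  refine ContinuousLinearMap.opNorm_le_bound _ hC fun x => ?_
  have hsq : ‖∑ i ∈ s, (c i * inner 𝕜 (w i) x) • w i‖ ^ 2 ≤ (C * ‖x‖) ^ 2 :=
    calc ‖∑ i ∈ s, (c i * inner 𝕜 (w i) x) • w i‖ ^ 2
        = ∑ i ∈ s, ‖c i‖ ^ 2 * ‖inner 𝕜 (w i) x‖ ^ 2 := by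
          simp only [hw.norm_sum_smul_sq, norm_mul, mul_pow]
      _ ≤ ∑ i ∈ s, C ^ 2 * ‖inner 𝕜 (w i) x‖ ^ 2 := by
          gcongr with i hi
          exact hc i hi
      _ ≤ (C * ‖x‖) ^ 2 := by
          rw [← Finset.mul_sum, mul_pow]
          exact mul_le_mul_of_nonneg_left (hw.sum_inner_products_le x) (sq_nonneg C)
  have happly : (∑ i ∈ s, c i • rankOne 𝕜 (w i) (w i)) x
      = ∑ i ∈ s, (c i * inner 𝕜 (w i) x) • w i := by
    simp [mul_smul]
  rw [happly]
  exact (pow_le_pow_iff_left₀ (norm_nonneg _) (by positivity) two_ne_zero).mp hsq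

end Orthonormal

theorem Complex.norm_one_div_sub_ofReal_le {z : ℂ} {a d : ℝ} (hd : 0 < d) (hgap : d ≤ z.re - a) :
    ‖1 / (z - a)‖ ≤ (√(d ^ 2 + z.im ^ 2))⁻¹ := by
  have hsqrt : √(d ^ 2 + z.im ^ 2) ≤ ‖z - a‖ := by
    rw [Complex.norm_def, Complex.normSq_apply]
    apply Real.sqrt_le_sqrt
    simp only [Complex.sub_re, Complex.ofReal_re, Complex.sub_im, Complex.ofReal_im, sub_zero]
    nlinarith
  rw [one_div, norm_inv]
  exact inv_anti₀ (by positivity) hsqrt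

section Matrix

open scoped Matrix.Norms.L2Operator

theorem specNorm_eq_norm_toEuclideanCLM {𝕜 : Type*} [RCLike 𝕜] {n : ℕ}
    (M : Matrix (Fin n) (Fin n) 𝕜) : specNorm M = ‖toEuclideanCLM (n := Fin n) (𝕜 := 𝕜) M‖ := rfl

theorem specNorm_nonneg {𝕜 : Type*} [RCLike 𝕜] {m n : ℕ} (M : Matrix (Fin m) (Fin n) 𝕜) :
    0 ≤ specNorm M :=
  norm_nonneg _

variable {n : ℕ}

theorem toEuclideanCLM_map_ofReal_vecMulVec (v : Fin n → ℝ) :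
    toEuclideanCLM (n := Fin n) (𝕜 := ℂ) ((vecMulVec v v).map Complex.ofReal)
      = rankOne ℂ (WithLp.toLp 2 (Complex.ofReal ∘ v)) (WithLp.toLp 2 (Complex.ofReal ∘ v)) := by
  have h := InnerProductSpace.symm_toEuclideanLin_rankOne (WithLp.toLp 2 (Complex.ofReal ∘ v))
    (WithLp.toLp 2 (Complex.ofReal ∘ v))
  have hM : (vecMulVec v v).map Complex.ofReal
      = vecMulVec (Complex.ofReal ∘ v) (star (Complex.ofReal ∘ v)) := by
    ext; simp [vecMulVec_apply]
  apply ContinuousLinearMap.coe_injective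
  rw [coe_toEuclideanCLM_eq_toEuclideanLin, hM]
  exact ((LinearEquiv.symm_apply_eq _).mp h).symm

theorem orthonormal_toLp_ofReal {ι : Type*} [DecidableEq ι] {S : Finset ι} {v : ι → Fin n → ℝ}
    (hv : ∀ i ∈ S, ∀ j ∈ S, v i ⬝ᵥ v j = if i = j then 1 else 0) :
    Orthonormal ℂ fun i : S => WithLp.toLp 2 (Complex.ofReal ∘ v i) := by
  rw [orthonormal_iff_ite]
  rintro ⟨i, hi⟩ ⟨j, hj⟩
  have hdot : ((v i ⬝ᵥ v j : ℝ) : ℂ) = if i = j then 1 else 0 := by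
    rw [hv i hi j hj]; split_ifs <;> simp
  simpa [EuclideanSpace.inner_eq_star_dotProduct, dotProduct, mul_comm] using hdot

theorem specNorm_sum_smul_vecMulVec_le {ι : Type*} [DecidableEq ι] {S : Finset ι}
    {v : ι → Fin n → ℝ} (hv : ∀ i ∈ S, ∀ j ∈ S, v i ⬝ᵥ v j = if i = j then 1 else 0)
    {c : ι → ℂ} {C : ℝ} (hC : 0 ≤ C) (hc : ∀ i ∈ S, ‖c i‖ ≤ C) :
    specNorm (∑ i ∈ S, c i • (vecMulVec (v i) (v i)).map Complex.ofReal) ≤ C := by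
  rw [specNorm_eq_norm_toEuclideanCLM, map_sum, ← Finset.sum_coe_sort S]
  simp only [map_smul, toEuclideanCLM_map_ofReal_vecMulVec]
  exact (orthonormal_toLp_ofReal hv).norm_sum_smul_rankOne_le Finset.univ hC
    fun i _ => hc i i.2

theorem EuclideanSpace.norm_sq_eq_norm_re_sq_add_norm_im_sq {ι : Type*} [Fintype ι]
    (x : EuclideanSpace ℂ ι) :
    ‖x‖ ^ 2 = ‖WithLp.toLp 2 fun k => (x k).re‖ ^ 2 + ‖WithLp.toLp 2 fun k => (x k).im‖ ^ 2 := by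
  simp only [EuclideanSpace.norm_sq_eq, ← Finset.sum_add_distrib, Complex.sq_norm,
    Complex.normSq_apply, Real.norm_eq_abs, sq_abs, ← sq]

theorem specNorm_map_ofReal_le {m : ℕ} (E : Matrix (Fin m) (Fin n) ℝ) :
    specNorm (E.map Complex.ofReal) ≤ specNorm E := by
  refine ContinuousLinearMap.opNorm_le_bound _ (norm_nonneg _) fun x => ?_
  set re : EuclideanSpace ℝ (Fin n) := WithLp.toLp 2 fun k => (x k).re
  set im : EuclideanSpace ℝ (Fin n) := WithLp.toLp 2 fun k => (x k).im
  set L := LinearMap.toContinuousLinearMap (toEuclideanLin E)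
  have hre : (WithLp.toLp 2 fun k => (toEuclideanLin (E.map Complex.ofReal) x k).re) = L re := by
    ext k; simp [L, re, mulVec, dotProduct, Complex.re_sum]
  have him : (WithLp.toLp 2 fun k => (toEuclideanLin (E.map Complex.ofReal) x k).im) = L im := by
    ext k; simp [L, im, mulVec, dotProduct, Complex.im_sum]
  have hsq : ‖toEuclideanLin (E.map Complex.ofReal) x‖ ^ 2 ≤ (specNorm E * ‖x‖) ^ 2 :=
    calc ‖toEuclideanLin (E.map Complex.ofReal) x‖ ^ 2 = ‖L re‖ ^ 2 + ‖L im‖ ^ 2 := by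
          rw [EuclideanSpace.norm_sq_eq_norm_re_sq_add_norm_im_sq, hre, him]
      _ ≤ (‖L‖ * ‖re‖) ^ 2 + (‖L‖ * ‖im‖) ^ 2 := by
          gcongr <;> exact L.le_opNorm _
      _ = (specNorm E * ‖x‖) ^ 2 := by
          rw [mul_pow, mul_pow, ← mul_add, ← EuclideanSpace.norm_sq_eq_norm_re_sq_add_norm_im_sq,
            mul_pow]; rfl
  exact (pow_le_pow_iff_left₀ (norm_nonneg _) (mul_nonneg (norm_nonneg _) (norm_nonneg _))
    two_ne_zero).mp hsq

/-- The resolvent `(z - A)⁻¹` of `A = ∑ λᵢ uᵢuᵢᵀ` compressed to `span {uᵢ | i ∈ S}`. -/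
noncomputable def partialResolvent {ι : Type*} (S : Finset ι) (u : ι → Fin n → ℝ) (lam : ι → ℝ)
    (z : ℂ) : Matrix (Fin n) (Fin n) ℂ :=
  ∑ i ∈ S, (1 / (z - lam i)) • (vecMulVec (u i) (u i)).map Complex.ofReal

section partialResolvent

variable {ι : Type*} [DecidableEq ι] {S : Finset ι} {u : ι → Fin n → ℝ} {lam : ι → ℝ}
  {z : ℂ} {d : ℝ}

theorem specNorm_partialResolvent_le
    (hu : ∀ i ∈ S, ∀ j ∈ S, u i ⬝ᵥ u j = if i = j then 1 else 0)
    (hd : 0 < d) (hgap : ∀ i ∈ S, d ≤ z.re - lam i) :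
    specNorm (partialResolvent S u lam z) ≤ (√(d ^ 2 + z.im ^ 2))⁻¹ :=
  specNorm_sum_smul_vecMulVec_le hu (by positivity)
    fun i hi => Complex.norm_one_div_sub_ofReal_le hd (hgap i hi)

theorem specNorm_partialResolvent_mul_mul_le
    (hu : ∀ i ∈ S, ∀ j ∈ S, u i ⬝ᵥ u j = if i = j then 1 else 0)
    (hd : 0 < d) (hgap : ∀ i ∈ S, d ≤ z.re - lam i) (E : Matrix (Fin n) (Fin n) ℝ) :
    specNorm (partialResolvent S u lam z * E.map Complex.ofReal * partialResolvent S u lam z)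
      ≤ specNorm E * (d ^ 2 + z.im ^ 2)⁻¹ := by
  set R := partialResolvent S u lam z
  have hR := specNorm_partialResolvent_le hu hd hgap
  calc specNorm (R * E.map Complex.ofReal * R)
      ≤ specNorm R * specNorm (E.map Complex.ofReal) * specNorm R :=
        (l2_opNorm_mul _ _).trans
          (mul_le_mul_of_nonneg_right (l2_opNorm_mul _ _) (specNorm_nonneg R))
    _ ≤ (√(d ^ 2 + z.im ^ 2))⁻¹ * specNorm E * (√(d ^ 2 + z.im ^ 2))⁻¹ :=
        mul_le_mul (mul_le_mul hR (specNorm_map_ofReal_le E) (specNorm_nonneg _) (by positivity))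
          hR (specNorm_nonneg R) (mul_nonneg (by positivity) (specNorm_nonneg E))
    _ = specNorm E * (d ^ 2 + z.im ^ 2)⁻¹ := by
        rw [mul_comm, ← mul_assoc, ← mul_inv, Real.mul_self_sqrt (by positivity), mul_comm]

theorem integral_specNorm_partialResolvent_mul_mul_le
    (hu : ∀ i ∈ S, ∀ j ∈ S, u i ⬝ᵥ u j = if i = j then 1 else 0)
    {x₀ : ℝ} (hd : 0 < d) (hgap : ∀ i ∈ S, d ≤ x₀ - lam i) (E : Matrix (Fin n) (Fin n) ℝ)
    (a b : ℝ) :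
    ∫ t in a..b, specNorm (partialResolvent S u lam (x₀ + t * Complex.I) * E.map Complex.ofReal
        * partialResolvent S u lam (x₀ + t * Complex.I))
      ≤ Real.pi * specNorm E / d := by
  have hbound : ∀ t : ℝ, ‖specNorm (partialResolvent S u lam (x₀ + t * Complex.I)
        * E.map Complex.ofReal * partialResolvent S u lam (x₀ + t * Complex.I))‖
      ≤ specNorm E * (d ^ 2 + t ^ 2)⁻¹ := fun t => by
    rw [Real.norm_of_nonneg (specNorm_nonneg _)]
    simpa using specNorm_partialResolvent_mul_mul_le (z := x₀ + t * Complex.I) hu hd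
      (by simpa using hgap) E
  have hcont : Continuous fun t : ℝ => specNorm E * (d ^ 2 + t ^ 2)⁻¹ := by
    fun_prop (disch := intros; positivity)
  have harctan : |Real.arctan (b / d) - Real.arctan (a / d)| ≤ Real.pi := by
    obtain ⟨hb₁, hb₂⟩ := Real.arctan_mem_Ioo (b / d)
    obtain ⟨ha₁, ha₂⟩ := Real.arctan_mem_Ioo (a / d)
    exact abs_le.mpr ⟨by linarith, by linarith⟩
  calc _ ≤ ‖∫ t in a..b, specNorm (partialResolvent S u lam (x₀ + t * Complex.I)
          * E.map Complex.ofReal * partialResolvent S u lam (x₀ + t * Complex.I))‖ :=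
        Real.le_norm_self _
    _ ≤ |∫ t in a..b, specNorm E * (d ^ 2 + t ^ 2)⁻¹| :=
        intervalIntegral.norm_integral_le_abs_of_norm_le (Filter.Eventually.of_forall hbound)
          (hcont.intervalIntegrable a b)
    _ = specNorm E * d⁻¹ * |Real.arctan (b / d) - Real.arctan (a / d)| := by
        rw [intervalIntegral.integral_const_mul, integral_inv_sq_add_sq hd.ne', abs_mul, abs_mul,
          abs_of_nonneg (specNorm_nonneg E), abs_of_pos (inv_pos.mpr hd), mul_assoc]
    _ ≤ specNorm E * d⁻¹ * Real.pi :=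
        mul_le_mul_of_nonneg_left harctan (mul_nonneg (specNorm_nonneg E) (inv_nonneg.2 hd.le))
    _ = Real.pi * specNorm E / d := by ring

end partialResolvent

end Matrix

theorem M1_tail_block_bound_general
    {n : ℕ} (E : Matrix (Fin n) (Fin n) ℝ)
    (lam : ℕ → ℝ)
    (hlam_mono : ∀ i ∈ Finset.Icc 1 n, ∀ j ∈ Finset.Icc 1 n, i ≤ j → lam j ≤ lam i)
    (u : ℕ → (Fin n → ℝ))
    (hu_on : ∀ i ∈ Finset.Icc 1 n, ∀ j ∈ Finset.Icc 1 n,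
      u i ⬝ᵥ u j = if i = j then 1 else 0)
    (p : ℕ)
    (r : ℕ)
    (hr_half : |lam p| / 2 ≤ lam p - lam (r + 1))
    (δp : ℝ)
    (hE_pos : 0 < specNorm E)
    (hgap_lo : 4 * specNorm E ≤ δp) (hgap_hi : δp ≤ |lam p| / 4)
    (x₀ T : ℝ) (hx₀ : x₀ = lam p - δp / 2) :
    (∫ t in (-T)..T, specNorm
      ((∑ i ∈ Finset.Icc (r + 1) n,
          (1 / ((x₀ : ℂ) + t * Complex.I - (lam i : ℂ))) •
            (vecMulVec (u i) (u i)).map Complex.ofReal)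
        * E.map Complex.ofReal
        * (∑ j ∈ Finset.Icc (r + 1) n,
          (1 / ((x₀ : ℂ) + t * Complex.I - (lam j : ℂ))) •
            (vecMulVec (u j) (u j)).map Complex.ofReal)))
      ≤ 16 * specNorm E / |lam p| := by
  have hlam_p : 0 < |lam p| := by linarith
  have hsub : Finset.Icc (r + 1) n ⊆ Finset.Icc 1 n := Finset.Icc_subset_Icc (by omega) le_rfl
  have hgap : ∀ i ∈ Finset.Icc (r + 1) n, 3 * |lam p| / 8 ≤ x₀ - lam i := by
    intro i hi
    obtain ⟨hri, hin⟩ := Finset.mem_Icc.mp hi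
    have hlam_i : lam i ≤ lam (r + 1) :=
      hlam_mono (r + 1) (hsub (Finset.left_mem_Icc.mpr (hri.trans hin))) i (hsub hi) hri
    linarith
  calc _ ≤ Real.pi * specNorm E / (3 * |lam p| / 8) :=
        integral_specNorm_partialResolvent_mul_mul_le
          (fun i hi j hj => hu_on i (hsub hi) j (hsub hj)) (by positivity) hgap E (-T) T
    _ ≤ 16 * specNorm E / |lam p| := by
        rw [div_le_div_iff₀ (by positivity) hlam_p]
        nlinarith [Real.pi_le_four, mul_pos hE_pos hlam_p]

/-- **Bound on the `(i,j > r)` block of `M₁`.**  Indices are 1-based;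
`σ₁ = ‖A‖`, `x₀ = λ_p − δ_p/2`, `T = 2σ₁`. -/
theorem M1_tail_block_bound
    {n : ℕ} (A E : Matrix (Fin n) (Fin n) ℝ) (hA : A.IsSymm) (hE : E.IsSymm)
    (lam : ℕ → ℝ)
    (hlam_mono : ∀ i ∈ Finset.Icc 1 n, ∀ j ∈ Finset.Icc 1 n, i ≤ j → lam j ≤ lam i)
    (u : ℕ → (Fin n → ℝ))
    (hu_on : ∀ i ∈ Finset.Icc 1 n, ∀ j ∈ Finset.Icc 1 n,
      u i ⬝ᵥ u j = if i = j then 1 else 0)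
    (hu_eig : ∀ i ∈ Finset.Icc 1 n, A *ᵥ u i = lam i • u i)
    (p : ℕ) (hp1 : 1 ≤ p) (hpn : p < n)
    (r : ℕ) (hpr : p ≤ r) (hrn : r < n)
    (hr_half : |lam p| / 2 ≤ lam p - lam (r + 1))
    (δp : ℝ) (hδp : δp = lam p - lam (p + 1))
    (hE_pos : 0 < specNorm E)
    (hgap_lo : 4 * specNorm E ≤ δp) (hgap_hi : δp ≤ |lam p| / 4)
    (x₀ T : ℝ) (hx₀ : x₀ = lam p - δp / 2) (hT : T = 2 * specNorm A) :
    (∫ t in (-T)..T, specNorm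
      ((∑ i ∈ Finset.Icc (r + 1) n,
          (1 / ((x₀ : ℂ) + t * Complex.I - (lam i : ℂ))) •
            (vecMulVec (u i) (u i)).map Complex.ofReal)
        * E.map Complex.ofReal
        * (∑ j ∈ Finset.Icc (r + 1) n,
          (1 / ((x₀ : ℂ) + t * Complex.I - (lam j : ℂ))) •
            (vecMulVec (u j) (u j)).map Complex.ofReal)))
      ≤ 16 * specNorm E / |lam p| :=
  M1_tail_block_bound_general E lam hlam_mono u hu_on p r hr_half δp hE_pos hgap_lo hgap_hi x₀ T hx₀
end
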